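/- arXiv:2210.14247 — 2 statements merged into one kernel-verified Lean document; each statement's English description precedes it below -/
import Mathlib

section
/- For every matrix composition a over M_d, define Ψ_a : evC → R by Ψ_a(X) := ⟨SS(δX), a⟩. Then Ψ_a is invariant modulo constants and invariant to warping in both directions independently: Ψ_a(X + C) = Ψ_a(X) for every X ∈ evC and every constant function C : ℕ×ℕ → R^d, and Ψ_a(Warp_{b,k}(X)) = Ψ_a(X) for all X ∈ evC, b ∈ {1,2}, k ∈ ℕ. -/
open scoped Classical

namespace TwoParam

/-! ### The free commutative monoid on `d` generators, written additively -/

abbrev Md (d : ℕ) := Fin d →₀ ℕ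

/-! ### Raw matrices over `Md d` and matrix compositions

A raw matrix is a function `ℕ → ℕ → Md d` together with a number of rows and
columns, normalized to be `0` (= the neutral element `ε`) outside the range.
The empty composition is the `0 × 0` matrix. -/

structure RawMat (d : ℕ) where
  rows : ℕ
  cols : ℕ
  entry : ℕ → ℕ → Md d
  entry_eq_zero : ∀ i j : ℕ, rows ≤ i ∨ cols ≤ j → entry i j = 0

namespace RawMat

variable {d : ℕ}

/-- A matrix composition: no row and no column consists entirely of `ε`.
(The empty `0 × 0` matrix vacuously satisfies this.) -/
def IsComp (a : RawMat d) : Prop :=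
  (∀ i < a.rows, ∃ j < a.cols, a.entry i j ≠ 0) ∧
  (∀ j < a.cols, ∃ i < a.rows, a.entry i j ≠ 0)

/-- The empty composition. -/
def empty (d : ℕ) : RawMat d := ⟨0, 0, fun _ _ => 0, fun _ _ _ => rfl⟩

/-- Diagonal block concatenation of two matrices. -/
def diag (a b : RawMat d) : RawMat d where
  rows := a.rows + b.rows
  cols := a.cols + b.cols
  entry := fun i j =>
    if i < a.rows ∧ j < a.cols then a.entry i j
    else if a.rows ≤ i ∧ a.cols ≤ j then b.entry (i - a.rows) (j - a.cols)
    else 0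
  entry_eq_zero := by
    intro i j h
    try dsimp only
    split_ifs with h1 h2
    · exact absurd h (by omega)
    · exact b.entry_eq_zero _ _ (by omega)
    · rfl

/-- A non-empty composition is connected if it admits no nontrivial
block-diagonal decomposition into compositions. -/
def Connected (a : RawMat d) : Prop :=
  a.IsComp ∧ a ≠ empty d ∧
    ∀ b c : RawMat d, b.IsComp → c.IsComp → a = b.diag c →
      b = empty d ∨ c = empty d

/-- Total weight of a matrix: the homomorphism `Md d → ℕ` sending every
generator to `1`, summed over all entries. -/
def weight (a : RawMat d) : ℕ :=
  ∑ i ∈ Finset.range a.rows, ∑ j ∈ Finset.range a.cols,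
    (a.entry i j).sum fun _ e => e

end RawMat

/-! ### Evaluation of monomials -/

/-- For `z ∈ R^d` and `m ∈ Md d`, the evaluation `z^(m) = ∏ j, z j ^ m j`. -/
def evalMon {d : ℕ} {R : Type*} [CommRing R] (z : Fin d → R) (m : Md d) : R :=
  m.prod fun j e => z j ^ e

/-! ### Two-parameter sums signature -/

/-- Strictly increasing chains of length `m` with values in `[lo, hi)`
(0-based indexing of the data). -/
noncomputable def chainsB (m lo hi : ℕ) : Finset (Fin m → ℕ) :=
  (Fintype.piFinset fun _ : Fin m => Finset.Ico lo hi).filter StrictMono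

/-- The bounded two-parameter sums signature coefficient `⟨SS_{l;r}(Z), a⟩`. -/
noncomputable def SSb {d : ℕ} {R : Type*} [CommRing R]
    (Z : ℕ × ℕ → Fin d → R) (l r : ℕ × ℕ) (a : RawMat d) : R :=
  ∑ ι ∈ chainsB a.rows l.1 r.1, ∑ κ ∈ chainsB a.cols l.2 r.2,
    ∏ s : Fin a.rows, ∏ t : Fin a.cols, evalMon (Z (ι s, κ t)) (a.entry s t)

/-- The (unbounded) two-parameter sums signature coefficient `⟨SS(Z), a⟩`,
for finitely supported `Z` a finite sum. -/
noncomputable def SSc {d : ℕ} {R : Type*} [CommRing R]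
    (Z : ℕ × ℕ → Fin d → R) (a : RawMat d) : R :=
  ∑ᶠ ι ∈ {f : Fin a.rows → ℕ | StrictMono f},
    ∑ᶠ κ ∈ {g : Fin a.cols → ℕ | StrictMono g},
      ∏ s : Fin a.rows, ∏ t : Fin a.cols, evalMon (Z (ι s, κ t)) (a.entry s t)

/-! ### Quasi-shuffle surjections -/

/-- `qShSet m s j`: surjections `{1,…,m+s} ↠ {1,…,j}` that are strictly
increasing on the first `m` and on the last `s` arguments. -/
noncomputable def qShSet (m s j : ℕ) : Finset (Fin (m + s) → Fin j) :=
  Finset.univ.filter fun q =>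
    Function.Surjective q ∧
    (∀ u v : Fin (m + s), u < v → (v : ℕ) < m → q u < q v) ∧
    (∀ u v : Fin (m + s), u < v → m ≤ (u : ℕ) → q u < q v)

/-- The summand `c^{p,q}` of the two-parameter quasi-shuffle: the `j × k`
matrix with entries `⋆_{u ∈ p⁻¹(x), v ∈ q⁻¹(y)} diag(a,b)_{u,v}`. -/
noncomputable def qshMat {d : ℕ} (a b : RawMat d) {j k : ℕ}
    (p : Fin (a.rows + b.rows) → Fin j) (q : Fin (a.cols + b.cols) → Fin k) :
    RawMat d where
  rows := j
  cols := k
  entry := fun x y =>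
    if hx : x < j then
      if hy : y < k then
        ∑ u ∈ Finset.univ.filter (fun u => p u = ⟨x, hx⟩),
          ∑ v ∈ Finset.univ.filter (fun v => q v = ⟨y, hy⟩),
            (a.diag b).entry u v
      else 0
    else 0
  entry_eq_zero := by
    intro x y h
    try dsimp only
    split_ifs with hx hy
    · exact absurd h (by omega)
    · rfl
    · rfl

/-- The two-parameter quasi-shuffle `a ⧢ b`, as an element of the free
`R`-module on matrices.  (The empty index sets for `j` or `k` outside
`[0, rows+rows]` resp. `[0, cols+cols]` implement the conventions
`e ⧢ a = a ⧢ e = a` and `e ⧢ e = e`.) -/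
noncomputable def qsh {d : ℕ} (R : Type*) [CommRing R] (a b : RawMat d) :
    RawMat d →₀ R :=
  ∑ j ∈ Finset.range (a.rows + b.rows + 1),
    ∑ k ∈ Finset.range (a.cols + b.cols + 1),
      ∑ p ∈ qShSet a.rows b.rows j,
        ∑ q ∈ qShSet a.cols b.cols k,
          Finsupp.single (qshMat a b p q) 1

/-- Bilinear extension of the quasi-shuffle to the free module. -/
noncomputable def qshL {d : ℕ} {R : Type*} [CommRing R]
    (F G : RawMat d →₀ R) : RawMat d →₀ R :=
  F.sum fun a ra => G.sum fun b rb => (ra * rb) • qsh R a b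

/-! ### Two-parameter data: eventually zero / eventually constant functions -/

variable {V : Type*}

/-- Eventually zero two-parameter data: finite support. -/
def EvZ [Zero V] (X : ℕ × ℕ → V) : Prop := (Function.support X).Finite

/-- Eventually constant two-parameter data: there is a box outside of which
`X` is constant; i.e. whenever two values differ, one of the two indices lies
in the box. -/
def EvC (X : ℕ × ℕ → V) : Prop :=
  ∃ n : ℕ × ℕ, ∀ i j : ℕ × ℕ, X i ≠ X j →
    (i.1 ≤ n.1 ∧ i.2 ≤ n.2) ∨ (j.1 ≤ n.1 ∧ j.2 ≤ n.2)

/-- The coordinate of `i` along the axis `a` (axis `0` = rows, `1` = cols). -/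
def axC (a : Fin 2) (i : ℕ × ℕ) : ℕ := if a = 0 then i.1 else i.2

/-- Shift an index one step down along the axis `a`. -/
def shiftD (a : Fin 2) (i : ℕ × ℕ) : ℕ × ℕ :=
  if a = 0 then (i.1 - 1, i.2) else (i.1, i.2 - 1)

/-- The zero insertion operator (0-based position `k`): insert a zero
row/column at position `k` along axis `a`. -/
def zeroIns [Zero V] (a : Fin 2) (k : ℕ) (X : ℕ × ℕ → V) : ℕ × ℕ → V :=
  fun i => if axC a i < k then X i else if axC a i = k then 0 else X (shiftD a i)

/-- The warping operator (0-based position `k`): duplicate the row/column at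
position `k` along axis `a`. -/
def warp (a : Fin 2) (k : ℕ) (X : ℕ × ℕ → V) : ℕ × ℕ → V :=
  fun i => if axC a i ≤ k then X i else X (shiftD a i)

/-- The two-parameter (forward) difference operator `δ`. -/
def diffOp [AddCommGroup V] (X : ℕ × ℕ → V) : ℕ × ℕ → V := fun i =>
  X (i.1 + 1, i.2 + 1) - X (i.1 + 1, i.2) - X (i.1, i.2 + 1) + X (i.1, i.2)

/-- The summation operator `ς`, a right inverse of `δ`:
`(ς Z)_{i,j} = Σ_{s ≥ i} Σ_{t ≥ j} Z_{s,t}`. -/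
noncomputable def sigmaOp [AddCommMonoid V] (Z : ℕ × ℕ → V) : ℕ × ℕ → V :=
  fun i => ∑ᶠ p ∈ {p : ℕ × ℕ | i.1 ≤ p.1 ∧ i.2 ≤ p.2}, Z p

/-- The set of all `n ∈ ℕ²` such that `X` is determined inside the
`n.1 × n.2` upper-left box (0-based size/count convention). -/
def sizeSetC (X : ℕ × ℕ → V) : Set (ℕ × ℕ) :=
  {n | ∀ i j : ℕ × ℕ, X i ≠ X j →
    (i.1 < n.1 ∧ i.2 < n.2) ∨ (j.1 < n.1 ∧ j.2 < n.2)}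

/-- `rows(X)` for eventually constant `X`: first component of the least
element of `sizeSetC X`. -/
noncomputable def rowsC (X : ℕ × ℕ → V) : ℕ := sInf (Prod.fst '' sizeSetC X)

/-- `cols(X)` for eventually constant `X`. -/
noncomputable def colsC (X : ℕ × ℕ → V) : ℕ := sInf (Prod.snd '' sizeSetC X)

/-- `rows(Z)` for eventually zero `Z`, defined via the support. -/
noncomputable def rowsZ [Zero V] (Z : ℕ × ℕ → V) : ℕ :=
  sInf {m : ℕ | ∀ i : ℕ × ℕ, Z i ≠ 0 → i.1 < m}

/-- `cols(Z)` for eventually zero `Z`, defined via the support. -/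
noncomputable def colsZ [Zero V] (Z : ℕ × ℕ → V) : ℕ :=
  sInf {m : ℕ | ∀ i : ℕ × ℕ, Z i ≠ 0 → i.2 < m}

/-- Diagonal concatenation `A ⊘ B` on eventually zero functions,
with `rows`/`cols` taken in the eventually-constant sense. -/
noncomputable def dconc [AddCommGroup V] (A B : ℕ × ℕ → V) : ℕ × ℕ → V :=
  A + (zeroIns 0 0)^[rowsC A] ((zeroIns 1 0)^[colsC A] B)

/-- Diagonal concatenation `A ⊘ B` on eventually zero functions,
with `rows`/`cols` taken in the support sense. -/
noncomputable def dconcZ [AddCommGroup V] (A B : ℕ × ℕ → V) : ℕ × ℕ → V :=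
  A + (zeroIns 0 0)^[rowsZ A] ((zeroIns 1 0)^[colsZ A] B)

/-- Concatenation along the diagonal `X ⊠ Y` on eventually constant
functions: `ς(δX) + Warp_{1,1}^{rows X}(Warp_{2,1}^{cols X}(Y))`. -/
noncomputable def bconc [AddCommGroup V] (X Y : ℕ × ℕ → V) : ℕ × ℕ → V :=
  sigmaOp (diffOp X) + (warp 0 0)^[rowsC X] ((warp 1 0)^[colsC X] Y)


/-! ### Two-parameter quasisymmetric functions -/

/-- Monomials in the commuting variables `x_{i,j}`, `(i,j) ∈ ℕ × ℕ`. -/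
abbrev Mon := (ℕ × ℕ) →₀ ℕ

/-- Total degree of a monomial. -/
def mdeg (m : Mon) : ℕ := m.sum fun _ e => e

/-- A formal power series (given by its coefficient function) has finite
total degree. -/
def FinDeg {R : Type*} [Zero R] (f : Mon → R) : Prop :=
  ∃ D : ℕ, ∀ m : Mon, f m ≠ 0 → mdeg m ≤ D

/-- `ℕ₀`-valued raw matrices, normalized to vanish outside the range. -/
structure NMat where
  rows : ℕ
  cols : ℕ
  entry : ℕ → ℕ → ℕ
  entry_eq_zero : ∀ i j : ℕ, rows ≤ i ∨ cols ≤ j → entry i j = 0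

namespace NMat

/-- An `ℕ₀`-matrix composition: no zero row and no zero column. -/
def IsComp (a : NMat) : Prop :=
  (∀ i < a.rows, ∃ j < a.cols, a.entry i j ≠ 0) ∧
  (∀ j < a.cols, ∃ i < a.rows, a.entry i j ≠ 0)

/-- The empty composition. -/
def empty : NMat := ⟨0, 0, fun _ _ => 0, fun _ _ _ => rfl⟩

/-- Diagonal block concatenation. -/
def diag (a b : NMat) : NMat where
  rows := a.rows + b.rows
  cols := a.cols + b.cols
  entry := fun i j =>
    if i < a.rows ∧ j < a.cols then a.entry i j
    else if a.rows ≤ i ∧ a.cols ≤ j then b.entry (i - a.rows) (j - a.cols)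
    else 0
  entry_eq_zero := by
    intro i j h
    try dsimp only
    split_ifs with h1 h2
    · exact absurd h (by omega)
    · exact b.entry_eq_zero _ _ (by omega)
    · rfl

end NMat

/-- The monomial `∏_{s,t} x_{ι_s, κ_t}^{a_{s,t}}` attached to a matrix `a`
and chains `ι`, `κ`. -/
noncomputable def monomialOf (a : NMat) (ι : Fin a.rows → ℕ) (κ : Fin a.cols → ℕ) : Mon :=
  ∑ s : Fin a.rows, ∑ t : Fin a.cols, Finsupp.single (ι s, κ t) (a.entry s t)

/-- The monomial quasisymmetric function `M_a` (as a coefficient function):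
each monomial `∏ x_{ι_s,κ_t}^{a_{s,t}}` for strictly increasing chains occurs
with coefficient `1`.  In particular `M_e = 1`. -/
noncomputable def monQ {R : Type*} [CommRing R] (a : NMat) : Mon → R := fun m =>
  if ∃ (ι : Fin a.rows → ℕ) (κ : Fin a.cols → ℕ),
      StrictMono ι ∧ StrictMono κ ∧ m = monomialOf a ι κ
  then 1 else 0

/-- Two-parameter quasisymmetric function: finite degree, and for every
matrix composition `a` and all strictly increasing chains `ι`, `κ`, the
coefficients of `∏ x_{ι_s,κ_t}^{a_{s,t}}` and of `∏ x_{s,t}^{a_{s,t}}`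
coincide. -/
def IsQSym {R : Type*} [CommRing R] (f : Mon → R) : Prop :=
  FinDeg f ∧ ∀ a : NMat, a.IsComp →
    ∀ (ι : Fin a.rows → ℕ) (κ : Fin a.cols → ℕ), StrictMono ι → StrictMono κ →
      f (monomialOf a ι κ) =
        f (monomialOf a (fun s => (s : ℕ)) (fun t => (t : ℕ)))

/-- Product of formal power series (Cauchy product of coefficient
functions). -/
noncomputable def mulF {R : Type*} [CommRing R] (f g : Mon → R) : Mon → R :=
  fun m => ∑ p ∈ Finset.HasAntidiagonal.antidiagonal m, f p.1 * g p.2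

/-- Two-parameter quasisymmetric functions form an `R`-submodule of the
module of coefficient functions. -/
noncomputable def QSymSub (R : Type*) [CommRing R] : Submodule R (Mon → R) where
  carrier := {f | IsQSym f}
  add_mem' := by
    rintro f g ⟨⟨Df, hDf⟩, hf⟩ ⟨⟨Dg, hDg⟩, hg⟩
    refine ⟨⟨max Df Dg, ?_⟩, ?_⟩
    · intro m hm
      by_contra hc
      push_neg at hc
      have h1 : f m = 0 := by
        by_contra h
        have := hDf m h
        omega
      have h2 : g m = 0 := by
        by_contra h
        have := hDg m h
        omega
      apply hm
      show f m + g m = 0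
      rw [h1, h2, add_zero]
    · intro a ha ι κ hι hκ
      show f _ + g _ = f _ + g _
      rw [hf a ha ι κ hι hκ, hg a ha ι κ hι hκ]
  zero_mem' := ⟨⟨0, fun _ hm => absurd rfl hm⟩, fun _ _ _ _ _ _ => rfl⟩
  smul_mem' := by
    rintro c f ⟨⟨Df, hDf⟩, hf⟩
    refine ⟨⟨Df, ?_⟩, ?_⟩
    · intro m hm
      apply hDf
      intro h
      apply hm
      show c • f m = 0
      rw [h, smul_zero]
    · intro a ha ι κ hι hκ
      show c • f _ = c • f _
      rw [hf a ha ι κ hι hκ]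

/-- Index shift used by the free analogue of zero insertion: indices with
coordinate `≥ k` along axis `a` are shifted up by one (axis `0` = rows). -/
def liftIdx (a : Fin 2) (k : ℕ) (i : ℕ × ℕ) : ℕ × ℕ :=
  if a = 0 then (if i.1 < k then i else (i.1 + 1, i.2))
  else (if i.2 < k then i else (i.1, i.2 + 1))

/-- The free analogue of zero insertion on formal power series: the algebra
endomorphism sending `x_i ↦ x_i` for `i_a < k`, `x_i ↦ 0` for `i_a = k` and
`x_i ↦ x_{i - e_a}` for `i_a > k` (0-based position `k`).  On coefficient
functions it is given by precomposition with the index lift. -/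
noncomputable def zeroF {R : Type*} [CommRing R] (a : Fin 2) (k : ℕ)
    (f : Mon → R) : Mon → R :=
  fun m => f (m.mapDomain (liftIdx a k))

/-- The quasi-shuffle summand `c^{p,q}` for `ℕ₀`-matrices. -/
noncomputable def nQshMat (a b : NMat) {j k : ℕ}
    (p : Fin (a.rows + b.rows) → Fin j) (q : Fin (a.cols + b.cols) → Fin k) :
    NMat where
  rows := j
  cols := k
  entry := fun x y =>
    if hx : x < j then
      if hy : y < k then
        ∑ u ∈ Finset.univ.filter (fun u => p u = ⟨x, hx⟩),
          ∑ v ∈ Finset.univ.filter (fun v => q v = ⟨y, hy⟩),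
            (a.diag b).entry u v
      else 0
    else 0
  entry_eq_zero := by
    intro x y h
    try dsimp only
    split_ifs with hx hy
    · exact absurd h (by omega)
    · rfl
    · rfl

/-- One-dimensional two-parameter sums signature coefficient `⟨SS(Z), a⟩`. -/
noncomputable def SScN {K : Type*} [CommRing K] (Z : ℕ × ℕ → K) (a : NMat) : K :=
  ∑ᶠ ι ∈ {f : Fin a.rows → ℕ | StrictMono f},
    ∑ᶠ κ ∈ {g : Fin a.cols → ℕ | StrictMono g},
      ∏ s : Fin a.rows, ∏ t : Fin a.cols, Z (ι s, κ t) ^ a.entry s t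

/-- Evaluation of a formal power series at finitely supported data. -/
noncomputable def evalSeries {K : Type*} [CommRing K] (f : Mon → K)
    (Z : ℕ × ℕ → K) : K :=
  ∑ᶠ m : Mon, f m * m.prod fun i e => Z i ^ e

end TwoParam

/-!
`δ` kills constants, and it turns warping into zero insertion:
`δ (Warp_{b,k} X)` is `δ X` with a zero row (or column) inserted at position `k`.
The signature of a composition does not see such a zero line: a chain `ι` through
the zero row contributes `0`, since that row of `a` has a non-`ε` entry, whose monomial
vanishes at `0`; the chains avoiding it are exactly the images `skip k ∘ ι` of all
chains, under the order embedding `skip k` of `ℕ` that jumps over `k`.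
-/

namespace TwoParam

def skip (k n : ℕ) : ℕ := if n < k then n else n + 1

lemma skip_strictMono (k : ℕ) : StrictMono (skip k) := by
  intro x y h
  unfold skip
  split_ifs <;> omega

lemma skip_ne (k n : ℕ) : skip k n ≠ k := by
  unfold skip
  split_ifs <;> omega

theorem finsum_strictMono_eq_comp_skip {M : Type*} [AddCommMonoid M] (k m : ℕ)
    (f : (Fin m → ℕ) → M)
    (hf : ∀ ι : Fin m → ℕ, StrictMono ι → k ∈ Set.range ι → f ι = 0) :
    ∑ᶠ ι ∈ {ι : Fin m → ℕ | StrictMono ι}, f ι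
      = ∑ᶠ ι ∈ {ι : Fin m → ℕ | StrictMono ι}, f (skip k ∘ ι) := by
  have avoid : ∑ᶠ ι ∈ {ι : Fin m → ℕ | StrictMono ι}, f ι
      = ∑ᶠ ι ∈ {ι : Fin m → ℕ | StrictMono ι ∧ k ∉ Set.range ι}, f ι := by
    refine finsum_mem_inter_support_eq' _ _ _ fun ι hι =>
      ⟨fun hmono => ⟨hmono, fun hk => hι (hf ι hmono hk)⟩, And.left⟩
  rw [avoid]
  refine (finsum_mem_eq_of_bijOn (skip k ∘ ·) ⟨?_, ?_, ?_⟩ fun _ _ => rfl).symm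
  · intro ι hι
    exact ⟨(skip_strictMono k).comp hι, fun ⟨s, hs⟩ => skip_ne k _ hs⟩
  · intro ι _ ι' _ h
    funext s
    exact (skip_strictMono k).injective (congrFun h s)
  · rintro ι ⟨hι, hk⟩
    have hne : ∀ s, ι s ≠ k := fun s hs => hk ⟨s, hs⟩
    refine ⟨fun s => if ι s < k then ι s else ι s - 1, fun x y hxy => ?_,
      funext fun s => ?_⟩
    · have := hι hxy
      have := hne x
      have := hne y
      dsimp only
      split_ifs <;> omega
    · have := hne s
      simp only [Function.comp_apply, skip]
      split_ifs <;> omega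

section Signature

variable {d : ℕ} {R : Type*} [CommRing R]

lemma evalMon_zero_of_ne_zero {m : Md d} (hm : m ≠ 0) : evalMon (0 : Fin d → R) m = 0 := by
  obtain ⟨j, hj⟩ := Finsupp.support_nonempty_iff.2 hm
  exact Finset.prod_eq_zero hj (zero_pow (Finsupp.mem_support_iff.1 hj))

lemma prod_evalMon_eq_zero_of_row {a : RawMat d} (ha : a.IsComp) {Z : ℕ × ℕ → Fin d → R}
    {ι : Fin a.rows → ℕ} (κ : Fin a.cols → ℕ) {s : Fin a.rows}
    (hZ : ∀ j, Z (ι s, j) = 0) :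
    ∏ s : Fin a.rows, ∏ t : Fin a.cols, evalMon (Z (ι s, κ t)) (a.entry s t) = 0 := by
  obtain ⟨t, ht, hst⟩ := ha.1 s s.isLt
  refine Finset.prod_eq_zero (Finset.mem_univ s)
    (Finset.prod_eq_zero (Finset.mem_univ ⟨t, ht⟩) ?_)
  rw [hZ]
  exact evalMon_zero_of_ne_zero hst

lemma prod_evalMon_eq_zero_of_col {a : RawMat d} (ha : a.IsComp) {Z : ℕ × ℕ → Fin d → R}
    (ι : Fin a.rows → ℕ) {κ : Fin a.cols → ℕ} {t : Fin a.cols}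
    (hZ : ∀ i, Z (i, κ t) = 0) :
    ∏ s : Fin a.rows, ∏ t : Fin a.cols, evalMon (Z (ι s, κ t)) (a.entry s t) = 0 := by
  obtain ⟨s, hs, hst⟩ := ha.2 t t.isLt
  refine Finset.prod_eq_zero (Finset.mem_univ ⟨s, hs⟩)
    (Finset.prod_eq_zero (Finset.mem_univ t) ?_)
  rw [hZ]
  exact evalMon_zero_of_ne_zero hst

end Signature

section ZeroInsertion

variable {V : Type*} [Zero V] (k : ℕ) (Z : ℕ × ℕ → V)

lemma zeroIns_zero_self (j : ℕ) : zeroIns 0 k Z (k, j) = 0 := by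
  simp [zeroIns, axC]

lemma zeroIns_one_self (i : ℕ) : zeroIns 1 k Z (i, k) = 0 := by
  simp [zeroIns, axC]

lemma zeroIns_zero_skip (i j : ℕ) : zeroIns 0 k Z (skip k i, j) = Z (i, j) := by
  unfold zeroIns skip axC shiftD
  split_ifs <;> first | rfl | omega

lemma zeroIns_one_skip (i j : ℕ) : zeroIns 1 k Z (i, skip k j) = Z (i, j) := by
  unfold zeroIns skip axC shiftD
  split_ifs <;> first | rfl | omega

end ZeroInsertion

theorem SSc_zeroIns {d : ℕ} {R : Type*} [CommRing R] {a : RawMat d} (ha : a.IsComp)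
    (Z : ℕ × ℕ → Fin d → R) (b : Fin 2) (k : ℕ) :
    SSc (zeroIns b k Z) a = SSc Z a := by
  unfold SSc
  obtain rfl | rfl : b = 0 ∨ b = 1 := by omega
  · rw [finsum_strictMono_eq_comp_skip k a.rows]
    · simp only [Function.comp_apply, zeroIns_zero_skip]
    · rintro ι - ⟨s, hs⟩
      refine finsum_mem_eq_zero_of_forall_eq_zero fun κ _ => ?_
      exact prod_evalMon_eq_zero_of_row ha κ (s := s) fun j => hs ▸ zeroIns_zero_self _ Z j
  · refine finsum_mem_congr rfl fun ι _ => ?_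
    rw [finsum_strictMono_eq_comp_skip k a.cols]
    · simp only [Function.comp_apply, zeroIns_one_skip]
    · rintro κ - ⟨t, ht⟩
      exact prod_evalMon_eq_zero_of_col ha ι (t := t) fun i => ht ▸ zeroIns_one_self _ Z i

section Difference

variable {V : Type*} [AddCommGroup V]

theorem diffOp_add_const (X : ℕ × ℕ → V) (c : V) : diffOp (X + fun _ => c) = diffOp X := by
  funext i
  simp only [diffOp, Pi.add_apply]
  abel

theorem diffOp_warp (b : Fin 2) (k : ℕ) (X : ℕ × ℕ → V) :
    diffOp (warp b k X) = zeroIns b k (diffOp X) := by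
  funext ⟨i, j⟩
  obtain rfl | rfl : b = 0 ∨ b = 1 := by omega
  · simp only [diffOp, warp, zeroIns, axC, shiftD, if_true]
    rcases lt_trichotomy i k with h | rfl | h
    · simp [h, h.le, Nat.succ_le_of_lt h]
    · simp
    · obtain ⟨i, rfl⟩ := Nat.exists_eq_add_of_lt h
      simp [h.not_gt, h.ne', show ¬ k + i + 1 + 1 ≤ k by omega, show ¬ k + i + 1 ≤ k by omega]
  · simp only [diffOp, warp, zeroIns, axC, shiftD, Fin.one_eq_zero_iff]
    rcases lt_trichotomy j k with h | rfl | h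
    · simp [h, h.le, Nat.succ_le_of_lt h]
    · simp
    · obtain ⟨j, rfl⟩ := Nat.exists_eq_add_of_lt h
      simp [h.not_gt, h.ne', show ¬ k + j + 1 + 1 ≤ k by omega, show ¬ k + j + 1 ≤ k by omega]

end Difference

end TwoParam

open TwoParam in
theorem statement10_general {d : ℕ} {R : Type*} [CommRing R]
    (a : RawMat d) (ha : a.IsComp) :
    (∀ X : ℕ × ℕ → Fin d → R, EvC X → ∀ c : Fin d → R,
      SSc (diffOp (X + fun _ => c)) a = SSc (diffOp X) a) ∧
    (∀ X : ℕ × ℕ → Fin d → R, EvC X → ∀ (b : Fin 2) (k : ℕ),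
      SSc (diffOp (warp b k X)) a = SSc (diffOp X) a) :=
  ⟨fun X _ c => by rw [diffOp_add_const],
   fun X _ b k => by rw [diffOp_warp, SSc_zeroIns ha]⟩

open TwoParam in
/-- the invariants `Ψ_a = ⟨SS(δ ·), a⟩` are invariant modulo
constants and under warping in both directions independently. -/
theorem statement10 {d : ℕ} {R : Type*} [CommRing R] [IsDomain R]
    (a : RawMat d) (ha : a.IsComp) :
    (∀ X : ℕ × ℕ → Fin d → R, EvC X → ∀ c : Fin d → R,
      SSc (diffOp (X + fun _ => c)) a = SSc (diffOp X) a) ∧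
    (∀ X : ℕ × ℕ → Fin d → R, EvC X → ∀ (b : Fin 2) (k : ℕ),
      SSc (diffOp (warp b k X)) a = SSc (diffOp X) a) :=
  statement10_general a ha
end

section
/- For all X, Y, W ∈ evC: (i) rows(X ⊠ Y) = rows(X) + rows(Y); (ii) cols(X ⊠ Y) = cols(X) + cols(Y); (iii) (X ⊠ Y) ⊠ W = X ⊠ (Y ⊠ W); (iv) δ(X ⊠ Y) = δ(X) ⊘ δ(Y). -/
open scoped Classical

/-! An eventually constant `X` equals some constant `c` off the box `[0, rows X) × [0, cols X)`,
and `rows X ≤ r` holds exactly when `X` is `c` on all rows `≥ r` (similarly for columns).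
Telescoping gives `ς(δX) = X - c`, hence the closed form `(X ⊠ Y)_i = X_i - c + Y_{i - size X}`,
from which size additivity, associativity and `δ(X ⊠ Y) = δX ⊘ δY` follow by index bookkeeping. -/

namespace TwoParam

section Iterates

variable {V : Type*}

lemma iterate_warp_row (m : ℕ) (X : ℕ × ℕ → V) :
    (warp 0 0)^[m] X = fun i => X (i.1 - m, i.2) := by
  induction m with
  | zero => rfl
  | succ m ih =>
    funext ⟨a, b⟩
    rw [Function.iterate_succ_apply', ih]
    by_cases ha : a = 0 <;> simp [warp, axC, shiftD, ha, Nat.sub_sub, Nat.add_comm]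

lemma iterate_warp_col (n : ℕ) (X : ℕ × ℕ → V) :
    (warp 1 0)^[n] X = fun i => X (i.1, i.2 - n) := by
  induction n with
  | zero => rfl
  | succ n ih =>
    funext ⟨a, b⟩
    rw [Function.iterate_succ_apply', ih]
    by_cases hb : b = 0 <;> simp [warp, axC, shiftD, hb, Nat.sub_sub, Nat.add_comm]

lemma iterate_zeroIns_row [Zero V] (m : ℕ) (X : ℕ × ℕ → V) :
    (zeroIns 0 0)^[m] X = fun i => if i.1 < m then 0 else X (i.1 - m, i.2) := by
  induction m with
  | zero => rfl
  | succ m ih =>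
    funext ⟨a, b⟩
    rw [Function.iterate_succ_apply', ih]
    rcases Nat.eq_zero_or_pos a with rfl | ha
    · simp [zeroIns, axC]
    · simp [zeroIns, axC, shiftD, ha.ne', Nat.sub_sub, Nat.add_comm, Nat.sub_lt_iff_lt_add ha]

lemma iterate_zeroIns_col [Zero V] (n : ℕ) (X : ℕ × ℕ → V) :
    (zeroIns 1 0)^[n] X = fun i => if i.2 < n then 0 else X (i.1, i.2 - n) := by
  induction n with
  | zero => rfl
  | succ n ih =>
    funext ⟨a, b⟩
    rw [Function.iterate_succ_apply', ih]
    rcases Nat.eq_zero_or_pos b with rfl | hb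
    · simp [zeroIns, axC]
    · simp [zeroIns, axC, shiftD, hb.ne', Nat.sub_sub, Nat.add_comm, Nat.sub_lt_iff_lt_add hb]

end Iterates

section Size

variable {V : Type*} {X : ℕ × ℕ → V} {m n r : ℕ} {c : V}

def ConstOffBox (m n : ℕ) (c : V) (X : ℕ × ℕ → V) : Prop :=
  ∀ i : ℕ × ℕ, m ≤ i.1 ∨ n ≤ i.2 → X i = c

lemma ConstOffBox.mem_sizeSetC (h : ConstOffBox m n c X) : (m, n) ∈ sizeSetC X := by
  intro i j hij
  by_contra hin
  exact hij ((h i (by omega)).trans (h j (by omega)).symm)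

lemma EvC.exists_constOffBox (hX : EvC X) : ∃ m n c, ConstOffBox m n c X := by
  obtain ⟨N, hN⟩ := hX
  refine ⟨N.1 + 1, N.2 + 1, X (N.1 + 1, N.2 + 1), fun i hi => ?_⟩
  by_contra hne
  rcases hN i _ hne with h | h <;> omega

lemma rowsC_le_iff (h : ConstOffBox m n c X) :
    rowsC X ≤ r ↔ ∀ i : ℕ × ℕ, r ≤ i.1 → X i = c := by
  constructor
  · intro hr i hi
    obtain ⟨p, hp, hp1⟩ := Nat.sInf_mem (s := Prod.fst '' sizeSetC X) ⟨m, _, h.mem_sizeSetC, rfl⟩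
    change p.1 = rowsC X at hp1
    -- `(m + p.1, 0)` lies outside both boxes, so it links `X i` to `c`
    have hfar : X (m + p.1, 0) = c := h _ (Or.inl (Nat.le_add_right m p.1))
    by_contra hne
    rcases hp i _ (hfar ▸ hne) with h' | h' <;> omega
  · intro hr
    have hbox : ConstOffBox r n c X := fun i hi => hi.elim (hr i) fun hn => h i (Or.inr hn)
    exact Nat.sInf_le ⟨_, hbox.mem_sizeSetC, rfl⟩

lemma colsC_le_iff (h : ConstOffBox m n c X) :
    colsC X ≤ r ↔ ∀ i : ℕ × ℕ, r ≤ i.2 → X i = c := by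
  constructor
  · intro hr i hi
    obtain ⟨p, hp, hp2⟩ := Nat.sInf_mem (s := Prod.snd '' sizeSetC X) ⟨n, _, h.mem_sizeSetC, rfl⟩
    change p.2 = colsC X at hp2
    have hfar : X (0, n + p.2) = c := h _ (Or.inr (Nat.le_add_right n p.2))
    by_contra hne
    rcases hp i _ (hfar ▸ hne) with h' | h' <;> omega
  · intro hr
    have hbox : ConstOffBox m r c X := fun i hi => hi.elim (fun hm => h i (Or.inl hm)) (hr i)
    exact Nat.sInf_le ⟨_, hbox.mem_sizeSetC, rfl⟩

lemma ConstOffBox.rowsC_colsC (h : ConstOffBox m n c X) : ConstOffBox (rowsC X) (colsC X) c X :=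
  fun i hi => hi.elim ((rowsC_le_iff h).1 le_rfl i) ((colsC_le_iff h).1 le_rfl i)

lemma EvC.exists_constOffBox_rowsC_colsC (hX : EvC X) : ∃ c, ConstOffBox (rowsC X) (colsC X) c X :=
  let ⟨_, _, c, h⟩ := hX.exists_constOffBox
  ⟨c, h.rowsC_colsC⟩

end Size

section Telescoping

variable {V : Type*} [AddCommGroup V] {X : ℕ × ℕ → V} {m n : ℕ} {c : V}

lemma sum_Ico_diffOp (X : ℕ × ℕ → V) (a b M N : ℕ) :
    ∑ s ∈ Finset.Ico a (a + M), ∑ t ∈ Finset.Ico b (b + N), diffOp X (s, t) =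
      X (a + M, b + N) - X (a + M, b) - X (a, b + N) + X (a, b) := by
  simp only [Finset.sum_Ico_eq_sum_range, add_tsub_cancel_left]
  have hcol (s : ℕ) : ∑ t ∈ Finset.range N, diffOp X (a + s, b + t) =
      (X (a + s + 1, b + N) - X (a + s + 1, b)) - (X (a + s, b + N) - X (a + s, b)) := by
    have htel := Finset.sum_range_sub (fun t => X (a + s + 1, b + t) - X (a + s, b + t)) N
    simp only [add_zero] at htel
    refine (Finset.sum_congr rfl fun t _ => ?_).trans (htel.trans (by abel))
    simp only [diffOp, ← add_assoc]
    abel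
  have htel := Finset.sum_range_sub (fun s => X (a + s, b + N) - X (a + s, b)) M
  simp only [add_zero, ← add_assoc] at htel
  rw [Finset.sum_congr rfl fun s _ => hcol s, htel]
  abel

lemma constOffBox_diffOp (h : ConstOffBox m n c X) : ConstOffBox m n 0 (diffOp X) := by
  intro i hi
  have h' (j : ℕ × ℕ) (hj : i.1 ≤ j.1 ∧ i.2 ≤ j.2) : X j = c :=
    h j (hi.imp (fun h1 => h1.trans hj.1) fun h2 => h2.trans hj.2)
  rw [diffOp, h' (i.1 + 1, i.2 + 1) ⟨Nat.le_succ _, Nat.le_succ _⟩,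
    h' (i.1 + 1, i.2) ⟨Nat.le_succ _, le_rfl⟩, h' (i.1, i.2 + 1) ⟨le_rfl, Nat.le_succ _⟩,
    h' (i.1, i.2) ⟨le_rfl, le_rfl⟩]
  abel

lemma ConstOffBox.sigmaOp_diffOp (h : ConstOffBox m n c X) (i : ℕ × ℕ) :
    sigmaOp (diffOp X) i = X i - c := by
  have hsupp := constOffBox_diffOp h
  rw [sigmaOp, finsum_cond_eq_sum_of_cond_iff
    (t := Finset.Ico i.1 (i.1 + m) ×ˢ Finset.Ico i.2 (i.2 + n))]
  · rw [Finset.sum_product, sum_Ico_diffOp, h _ (Or.inl (Nat.le_add_left m i.1)),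
      h _ (Or.inl (Nat.le_add_left m i.1)), h _ (Or.inr (Nat.le_add_left n i.2))]
    abel
  · intro p hp
    have hp_box : p.1 < m ∧ p.2 < n := by
      by_contra hout
      exact hp (hsupp p (by omega))
    simp only [Set.mem_ofPred_eq, Finset.mem_product, Finset.mem_Ico]
    omega

end Telescoping

section Concatenation

variable {V : Type*} [AddCommGroup V] {X Y : ℕ × ℕ → V} {m n : ℕ} {c cX cY : V}

lemma rowsC_diffOp (h : ConstOffBox m n c X) : rowsC (diffOp X) = rowsC X := by
  refine eq_of_forall_ge_iff fun r => ?_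
  rw [rowsC_le_iff (constOffBox_diffOp h), rowsC_le_iff h]
  constructor
  · intro hd i hi
    rw [← sub_eq_zero, ← h.sigmaOp_diffOp i]
    exact finsum_mem_of_eqOn_zero fun p hp => hd p (hi.trans hp.1)
  · intro hX i hi
    have hbox : ConstOffBox r n c X := fun j hj => hj.elim (hX j) fun hn => h j (Or.inr hn)
    exact constOffBox_diffOp hbox i (Or.inl hi)

lemma colsC_diffOp (h : ConstOffBox m n c X) : colsC (diffOp X) = colsC X := by
  refine eq_of_forall_ge_iff fun r => ?_
  rw [colsC_le_iff (constOffBox_diffOp h), colsC_le_iff h]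
  constructor
  · intro hd i hi
    rw [← sub_eq_zero, ← h.sigmaOp_diffOp i]
    exact finsum_mem_of_eqOn_zero fun p hp => hd p (hi.trans hp.2)
  · intro hX i hi
    have hbox : ConstOffBox m r c X := fun j hj => hj.elim (fun hm => h j (Or.inl hm)) (hX j)
    exact constOffBox_diffOp hbox i (Or.inr hi)

lemma dconc_apply (A B : ℕ × ℕ → V) (i : ℕ × ℕ) :
    dconc A B i = A i + if i.1 < rowsC A ∨ i.2 < colsC A then 0
      else B (i.1 - rowsC A, i.2 - colsC A) := by
  rw [dconc, Pi.add_apply, iterate_zeroIns_row, iterate_zeroIns_col, ite_or]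

lemma bconc_apply (hX : ConstOffBox (rowsC X) (colsC X) cX X) (Y : ℕ × ℕ → V) (i : ℕ × ℕ) :
    bconc X Y i = X i - cX + Y (i.1 - rowsC X, i.2 - colsC X) := by
  rw [bconc, Pi.add_apply, hX.sigmaOp_diffOp, iterate_warp_row, iterate_warp_col]

lemma ConstOffBox.bconc (hX : ConstOffBox (rowsC X) (colsC X) cX X)
    (hY : ConstOffBox (rowsC Y) (colsC Y) cY Y) :
    ConstOffBox (rowsC X + rowsC Y) (colsC X + colsC Y) cY (bconc X Y) := by
  intro i hi
  rw [bconc_apply hX, hX i (by omega), hY _ (by omega), sub_self, zero_add]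

lemma rowsC_bconc (hX : ConstOffBox (rowsC X) (colsC X) cX X)
    (hY : ConstOffBox (rowsC Y) (colsC Y) cY Y) :
    rowsC (bconc X Y) = rowsC X + rowsC Y := by
  refine eq_of_forall_ge_iff fun r => ?_
  simp only [rowsC_le_iff (hX.bconc hY), bconc_apply hX]
  constructor
  · intro hr
    have hYr : rowsC Y ≤ r - rowsC X := (rowsC_le_iff hY).2 fun j hj => by
      have hj' := hr (j.1 + rowsC X, j.2 + colsC X) (by dsimp only; omega)
      simpa only [hX (j.1 + rowsC X, j.2 + colsC X) (Or.inl (Nat.le_add_left _ _)), sub_self,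
        zero_add, Nat.add_sub_cancel] using hj'
    have hXr : rowsC X ≤ r := (rowsC_le_iff hX).2 fun i hi => by
      have hi' := hr i hi
      rwa [(rowsC_le_iff hY).1 hYr _ (by dsimp only; omega), add_eq_right, sub_eq_zero] at hi'
    omega
  · intro hr i hi
    rw [hX i (Or.inl (by omega)), hY _ (Or.inl (by dsimp only; omega)), sub_self, zero_add]

lemma colsC_bconc (hX : ConstOffBox (rowsC X) (colsC X) cX X)
    (hY : ConstOffBox (rowsC Y) (colsC Y) cY Y) :
    colsC (bconc X Y) = colsC X + colsC Y := by
  refine eq_of_forall_ge_iff fun r => ?_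
  simp only [colsC_le_iff (hX.bconc hY), bconc_apply hX]
  constructor
  · intro hr
    have hYr : colsC Y ≤ r - colsC X := (colsC_le_iff hY).2 fun j hj => by
      have hj' := hr (j.1 + rowsC X, j.2 + colsC X) (by dsimp only; omega)
      simpa only [hX (j.1 + rowsC X, j.2 + colsC X) (Or.inl (Nat.le_add_left _ _)), sub_self,
        zero_add, Nat.add_sub_cancel] using hj'
    have hXr : colsC X ≤ r := (colsC_le_iff hX).2 fun i hi => by
      have hi' := hr i hi
      rwa [(colsC_le_iff hY).1 hYr _ (by dsimp only; omega), add_eq_right, sub_eq_zero] at hi'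
    omega
  · intro hr i hi
    rw [hX i (Or.inr (by omega)), hY _ (Or.inr (by dsimp only; omega)), sub_self, zero_add]

lemma bconc_assoc (hX : ConstOffBox (rowsC X) (colsC X) cX X)
    (hY : ConstOffBox (rowsC Y) (colsC Y) cY Y) (W : ℕ × ℕ → V) :
    bconc (bconc X Y) W = bconc X (bconc Y W) := by
  have hXY : ConstOffBox (rowsC (bconc X Y)) (colsC (bconc X Y)) cY (bconc X Y) := by
    rw [rowsC_bconc hX hY, colsC_bconc hX hY]
    exact hX.bconc hY
  funext i
  rw [bconc_apply hXY, bconc_apply hX, bconc_apply hX, bconc_apply hY, rowsC_bconc hX hY,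
    colsC_bconc hX hY]
  simp only [Nat.sub_sub]
  abel

lemma diffOp_bconc (hX : ConstOffBox (rowsC X) (colsC X) cX X) (Y : ℕ × ℕ → V) :
    diffOp (bconc X Y) = dconc (diffOp X) (diffOp Y) := by
  funext i
  rw [dconc_apply, rowsC_diffOp hX, colsC_diffOp hX]
  simp only [diffOp, bconc_apply hX]
  split_ifs with hi
  · -- left of or above its block, the shifted copy of `Y` is constant along the axis of `hi`
    rcases hi with hi | hi
    · rw [show i.1 + 1 - rowsC X = i.1 - rowsC X by omega]
      abel
    · rw [show i.2 + 1 - colsC X = i.2 - colsC X by omega]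
      abel
  · rw [show i.1 + 1 - rowsC X = i.1 - rowsC X + 1 by omega,
      show i.2 + 1 - colsC X = i.2 - colsC X + 1 by omega]
    abel

end Concatenation

end TwoParam

open TwoParam in
theorem statement12_general {d : ℕ} {R : Type*} [CommRing R]
    (X Y W : ℕ × ℕ → Fin d → R) (hX : EvC X) (hY : EvC Y) :
    rowsC (bconc X Y) = rowsC X + rowsC Y ∧
    colsC (bconc X Y) = colsC X + colsC Y ∧
    bconc (bconc X Y) W = bconc X (bconc Y W) ∧
    diffOp (bconc X Y) = dconc (diffOp X) (diffOp Y) := by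
  obtain ⟨cX, hcX⟩ := hX.exists_constOffBox_rowsC_colsC
  obtain ⟨cY, hcY⟩ := hY.exists_constOffBox_rowsC_colsC
  exact ⟨rowsC_bconc hcX hcY, colsC_bconc hcX hcY, bconc_assoc hcX hcY W, diffOp_bconc hcX Y⟩

open TwoParam in
/-- size additivity, associativity of `⊠`, and compatibility
`δ(X ⊠ Y) = δX ⊘ δY`. -/
theorem statement12 {d : ℕ} {R : Type*} [CommRing R] [IsDomain R]
    (X Y W : ℕ × ℕ → Fin d → R) (hX : EvC X) (hY : EvC Y) (hW : EvC W) :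
    rowsC (bconc X Y) = rowsC X + rowsC Y ∧
    colsC (bconc X Y) = colsC X + colsC Y ∧
    bconc (bconc X Y) W = bconc X (bconc Y W) ∧
    diffOp (bconc X Y) = dconc (diffOp X) (diffOp Y) :=
  statement12_general X Y W hX hY
end
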